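/- Let N ∈ ℕ with N ≥ 2, let Ω ⊆ ℝᴺ be open, let w : ℝᴺ → ℝ be C² on Ω, and let Y : ℝᴺ → ℝᴺ be a C¹ vector field with compact support contained in Ω. Then ∫_Ω ⟨∇w(x), ∇(∇w·Y)(x)⟩ dx = ∫_Ω ( ⟨(DY(x))∇w(x), ∇w(x)⟩ − ½ |∇w(x)|² (div Y)(x) ) dx, where ∇w·Y denotes the scalar function x ↦ ⟨∇w(x), Y(x)⟩. -/

import Mathlib

/-!
By the product rule, `⟨∇w, ∇⟨∇w, Y⟩⟩ = ⟨(DY)∇w, ∇w⟩ + ⟨∇w, D²w Y⟩`, and since the Hessian of `w`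
is symmetric the last term is `½ D(|∇w|²) Y`. Integrating by parts against each compactly
supported component `Yᵢ` turns `½ ∫ D(|∇w|²) Y` into `-½ ∫ |∇w|² div Y`. All integrands vanish
off the compact set `tsupport Y ⊆ Ω`, which is why `w` need only be `C²` on `Ω`.
-/

open MeasureTheory Metric
open scoped RealInnerProductSpace

/-- The divergence of a vector field on `ℝᴺ`. -/
noncomputable def divg {N : ℕ} (Y : EuclideanSpace ℝ (Fin N) → EuclideanSpace ℝ (Fin N))
    (x : EuclideanSpace ℝ (Fin N)) : ℝ :=
  ∑ i : Fin N, fderiv ℝ (fun y => Y y i) x (EuclideanSpace.single i 1)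

section Gradient

variable {E : Type*} [NormedAddCommGroup E] [InnerProductSpace ℝ E] [CompleteSpace E]
  {f : E → ℝ} {x : E}

theorem inner_fderiv_gradient_apply (f : E → ℝ) (x v u : E) :
    ⟪fderiv ℝ (gradient f) x v, u⟫ = fderiv ℝ (fderiv ℝ f) x v u := by
  change ⟪fderiv ℝ ((InnerProductSpace.toDual ℝ E).symm ∘ fderiv ℝ f) x v, u⟫ = _
  rw [LinearIsometryEquiv.comp_fderiv]
  exact InnerProductSpace.toDual_symm_apply

theorem ContDiffAt.inner_fderiv_gradient_comm (hf : ContDiffAt ℝ 2 f x) (v u : E) :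
    ⟪fderiv ℝ (gradient f) x v, u⟫ = ⟪fderiv ℝ (gradient f) x u, v⟫ := by
  simp only [inner_fderiv_gradient_apply]
  exact hf.isSymmSndFDerivAt (by simp) v u

theorem ContDiffAt.differentiableAt_gradient (hf : ContDiffAt ℝ 2 f x) :
    DifferentiableAt ℝ (gradient f) x :=
  (InnerProductSpace.toDual ℝ E).symm.differentiableAt.comp x
    ((hf.fderiv_right (m := 1) le_rfl).differentiableAt one_ne_zero)

theorem ContDiffOn.gradient_of_isOpen {s : Set E} {m n : WithTop ℕ∞} (hf : ContDiffOn ℝ n f s)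
    (hs : IsOpen s) (hmn : m + 1 ≤ n) : ContDiffOn ℝ m (gradient f) s :=
  (InnerProductSpace.toDual ℝ E).symm.contDiff.comp_contDiffOn (hf.fderiv_of_isOpen hs hmn)

theorem inner_gradient_gradient_inner_eq (hf : ContDiffAt ℝ 2 f x) {Y : E → E}
    (hY : DifferentiableAt ℝ Y x) :
    ⟪gradient f x, gradient (fun y => ⟪gradient f y, Y y⟫) x⟫
      = ⟪fderiv ℝ Y x (gradient f x), gradient f x⟫
        + 1 / 2 * fderiv ℝ (fun y => ‖gradient f y‖ ^ 2) x (Y x) := by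
  have hG := hf.differentiableAt_gradient
  rw [real_inner_comm, inner_gradient_left, fderiv_inner_apply ℝ hG hY,
    hG.hasFDerivAt.norm_sq.fderiv]
  simp only [FunLike.coe_smul, Pi.smul_apply, ContinuousLinearMap.comp_apply, innerSL_apply_apply,
    hf.inner_fderiv_gradient_comm (gradient f x) (Y x), real_inner_comm (gradient f x)]
  ring

end Gradient

section Integrability

variable {X : Type*} [TopologicalSpace X] [T2Space X] [MeasurableSpace X] [OpensMeasurableSpace X]
  {μ : Measure X} [IsLocallyFiniteMeasure μ]

theorem ContinuousOn.integrable_of_forall_notMem_eq_zero {F : Type*} [NormedAddCommGroup F]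
    {φ : X → F} {K : Set X} (hφ : ContinuousOn φ K) (hK : IsCompact K)
    (h0 : ∀ x ∉ K, φ x = 0) : Integrable φ μ :=
  (hφ.integrableOn_compact hK).integrable_of_forall_notMem_eq_zero h0

theorem ContinuousOn.integrable_mul_of_tsupport_subset {φ ψ : X → ℝ} {s : Set X}
    (hφ : ContinuousOn φ s) (hψ : Continuous ψ) (hψc : HasCompactSupport ψ)
    (hψs : tsupport ψ ⊆ s) : Integrable (fun x => φ x * ψ x) μ :=
  ((hφ.mono hψs).mul hψ.continuousOn).integrable_of_forall_notMem_eq_zero hψc fun x hx => by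
    simp [image_eq_zero_of_notMem_tsupport hx]

end Integrability

theorem integral_mul_fderiv_eq_neg_fderiv_mul_of_contDiffOn {E : Type*} [NormedAddCommGroup E]
    [NormedSpace ℝ E] [FiniteDimensional ℝ E] [MeasurableSpace E] [BorelSpace E] {μ : Measure E}
    [μ.IsAddHaarMeasure] {Ω : Set E} (hΩ : IsOpen Ω) {f g : E → ℝ}
    (hf : ContDiffOn ℝ 1 f Ω) (hg : ContDiff ℝ 1 g) (hgc : HasCompactSupport g)
    (hgΩ : tsupport g ⊆ Ω) (v : E) :
    ∫ x, f x * fderiv ℝ g x v ∂μ = -∫ x, fderiv ℝ f x v * g x ∂μ := by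
  have hg' : Continuous (fderiv ℝ g · v) :=
    (hg.continuous_fderiv one_ne_zero).clm_apply continuous_const
  refine integral_mul_fderiv_eq_neg_fderiv_mul_of_integrable
    (((hf.continuousOn_fderiv_of_isOpen hΩ le_rfl).clm_apply continuousOn_const
      ).integrable_mul_of_tsupport_subset hg.continuous hgc hgΩ)
    (hf.continuousOn.integrable_mul_of_tsupport_subset hg' (hgc.fderiv_apply ℝ v)
      ((tsupport_fderiv_apply_subset ℝ v).trans hgΩ))
    (hf.continuousOn.integrable_mul_of_tsupport_subset hg.continuous hgc hgΩ)
    (fun x hx => (hf.contDiffAt (hΩ.mem_nhds (hgΩ hx))).differentiableAt one_ne_zero)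
    (fun x _ => hg.differentiable one_ne_zero x)

section Divergence

variable {N : ℕ} {Y : EuclideanSpace ℝ (Fin N) → EuclideanSpace ℝ (Fin N)}

theorem EuclideanSpace.tsupport_apply_subset (i : Fin N) :
    tsupport (fun y => Y y i) ⊆ tsupport Y :=
  tsupport_comp_subset (g := fun v : EuclideanSpace ℝ (Fin N) => v i) rfl Y

theorem divg_eq_zero_of_notMem_tsupport {x : EuclideanSpace ℝ (Fin N)} (hx : x ∉ tsupport Y) :
    divg Y x = 0 :=
  Finset.sum_eq_zero fun i _ => by
    rw [fderiv_of_notMem_tsupport ℝ fun h => hx (EuclideanSpace.tsupport_apply_subset i h),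
      zero_apply]

theorem ContDiff.continuous_divg (hY : ContDiff ℝ 1 Y) : Continuous (divg Y) :=
  continuous_finsetSum _ fun i _ =>
    ((((EuclideanSpace.proj i).contDiff.comp hY).continuous_fderiv one_ne_zero).clm_apply
      continuous_const)

theorem ContinuousLinearMap.apply_eq_sum_single_mul (L : EuclideanSpace ℝ (Fin N) →L[ℝ] ℝ)
    (v : EuclideanSpace ℝ (Fin N)) : L v = ∑ i, L (EuclideanSpace.single i 1) * v i := by
  conv_lhs => rw [← (EuclideanSpace.basisFun (Fin N) ℝ).sum_repr v]
  simp [mul_comm]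

theorem setIntegral_mul_divg_eq_neg {Ω : Set (EuclideanSpace ℝ (Fin N))} (hΩ : IsOpen Ω)
    {F : EuclideanSpace ℝ (Fin N) → ℝ} (hF : ContDiffOn ℝ 1 F Ω) (hY : ContDiff ℝ 1 Y)
    (hYc : HasCompactSupport Y) (hYΩ : tsupport Y ⊆ Ω) :
    ∫ x in Ω, F x * divg Y x = -∫ x in Ω, fderiv ℝ F x (Y x) := by
  have hYi (i : Fin N) : ContDiff ℝ 1 (fun y => Y y i) :=
    (EuclideanSpace.proj (𝕜 := ℝ) i).contDiff.comp hY
  have hYic (i : Fin N) : HasCompactSupport (fun y => Y y i) :=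
    hYc.of_isClosed_subset (isClosed_tsupport _) (EuclideanSpace.tsupport_apply_subset i)
  have hYiΩ (i : Fin N) : tsupport (fun y => Y y i) ⊆ Ω :=
    (EuclideanSpace.tsupport_apply_subset i).trans hYΩ
  rw [setIntegral_eq_integral_of_forall_compl_eq_zero fun x hx => by
      rw [divg_eq_zero_of_notMem_tsupport fun h => hx (hYΩ h), mul_zero],
    setIntegral_eq_integral_of_forall_compl_eq_zero fun x hx => by
      rw [image_eq_zero_of_notMem_tsupport fun h => hx (hYΩ h), map_zero]]
  simp_rw [divg, Finset.mul_sum, ContinuousLinearMap.apply_eq_sum_single_mul (fderiv ℝ F _) (Y _)]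
  rw [integral_finsetSum _ fun i _ => hF.continuousOn.integrable_mul_of_tsupport_subset
      (((hYi i).continuous_fderiv one_ne_zero).clm_apply continuous_const)
      ((hYic i).fderiv_apply ℝ _) ((tsupport_fderiv_apply_subset ℝ _).trans (hYiΩ i)),
    integral_finsetSum _ fun i _ =>
      ((hF.continuousOn_fderiv_of_isOpen hΩ le_rfl).clm_apply continuousOn_const
        ).integrable_mul_of_tsupport_subset (hYi i).continuous (hYic i) (hYiΩ i),
    ← Finset.sum_neg_distrib]
  exact Finset.sum_congr rfl fun i _ =>
    integral_mul_fderiv_eq_neg_fderiv_mul_of_contDiffOn hΩ hF (hYi i) (hYic i) (hYiΩ i) _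

end Divergence

theorem stmt14_general (N : ℕ) (Ω : Set (EuclideanSpace ℝ (Fin N))) (hΩ : IsOpen Ω)
    (w : EuclideanSpace ℝ (Fin N) → ℝ) (hw : ContDiffOn ℝ 2 w Ω)
    (Y : EuclideanSpace ℝ (Fin N) → EuclideanSpace ℝ (Fin N))
    (hY : ContDiff ℝ 1 Y) (hYc : HasCompactSupport Y) (hYs : tsupport Y ⊆ Ω) :
    ∫ x in Ω, ⟪gradient w x, gradient (fun y => ⟪gradient w y, Y y⟫) x⟫
      = ∫ x in Ω, (⟪fderiv ℝ Y x (gradient w x), gradient w x⟫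
          - (1 / 2) * ‖gradient w x‖ ^ 2 * divg Y x) := by
  have hG : ContDiffOn ℝ 1 (gradient w) Ω := hw.gradient_of_isOpen hΩ le_rfl
  have hF : ContDiffOn ℝ 1 (fun y => ‖gradient w y‖ ^ 2) Ω := hG.norm_sq ℝ
  have hA : Integrable (fun x => ⟪fderiv ℝ Y x (gradient w x), gradient w x⟫) :=
    ((((hY.continuous_fderiv one_ne_zero).continuousOn.clm_apply hG.continuousOn).inner
      hG.continuousOn).mono hYs).integrable_of_forall_notMem_eq_zero hYc fun x hx => by
        simp [fderiv_of_notMem_tsupport ℝ hx]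
  have hB : Integrable (fun x => fderiv ℝ (fun y => ‖gradient w y‖ ^ 2) x (Y x)) :=
    (((hF.continuousOn_fderiv_of_isOpen hΩ le_rfl).clm_apply hY.continuous.continuousOn).mono
      hYs).integrable_of_forall_notMem_eq_zero hYc fun x hx => by
        simp [image_eq_zero_of_notMem_tsupport hx]
  have hC : Integrable (fun x => ‖gradient w x‖ ^ 2 * divg Y x) :=
    (hF.continuousOn.mul hY.continuous_divg.continuousOn).mono hYs
      |>.integrable_of_forall_notMem_eq_zero hYc fun x hx => by
        simp [divg_eq_zero_of_notMem_tsupport hx]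
  calc ∫ x in Ω, ⟪gradient w x, gradient (fun y => ⟪gradient w y, Y y⟫) x⟫
      = ∫ x in Ω, (⟪fderiv ℝ Y x (gradient w x), gradient w x⟫
          + 1 / 2 * fderiv ℝ (fun y => ‖gradient w y‖ ^ 2) x (Y x)) :=
        setIntegral_congr_fun hΩ.measurableSet fun x hx => inner_gradient_gradient_inner_eq
          (hw.contDiffAt (hΩ.mem_nhds hx)) (hY.differentiable one_ne_zero x)
    _ = (∫ x in Ω, ⟪fderiv ℝ Y x (gradient w x), gradient w x⟫)
          - 1 / 2 * ∫ x in Ω, ‖gradient w x‖ ^ 2 * divg Y x := by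
        rw [integral_add hA.integrableOn (hB.integrableOn.const_mul _), integral_const_mul,
          setIntegral_mul_divg_eq_neg hΩ hF hY hYc hYs]
        ring
    _ = _ := by
        rw [← integral_const_mul, ← integral_sub hA.integrableOn (hC.integrableOn.const_mul _)]
        simp only [mul_assoc]

/-- integration-by-parts identity
`∫_Ω ⟨∇w, ∇(∇w·Y)⟩ = ∫_Ω (⟨(DY)∇w, ∇w⟩ − ½|∇w|² div Y)`
for `w` of class `C²` on `Ω` and a `C¹` vector field `Y` compactly supported in `Ω`. -/
theorem stmt14 (N : ℕ) (hN : 2 ≤ N) (Ω : Set (EuclideanSpace ℝ (Fin N))) (hΩ : IsOpen Ω)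
    (w : EuclideanSpace ℝ (Fin N) → ℝ) (hw : ContDiffOn ℝ 2 w Ω)
    (Y : EuclideanSpace ℝ (Fin N) → EuclideanSpace ℝ (Fin N))
    (hY : ContDiff ℝ 1 Y) (hYc : HasCompactSupport Y) (hYs : tsupport Y ⊆ Ω) :
    ∫ x in Ω, ⟪gradient w x, gradient (fun y => ⟪gradient w y, Y y⟫) x⟫
      = ∫ x in Ω, (⟪fderiv ℝ Y x (gradient w x), gradient w x⟫
          - (1 / 2) * ‖gradient w x‖ ^ 2 * divg Y x) :=
  stmt14_general N Ω hΩ w hw Y hY hYc hYs
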